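/- arXiv:2605.09651 — 2 statements merged into one kernel-verified Lean document; each statement's English description precedes it below -/
import Mathlib

section
/- For fixed total S = s_1 + ... + s_k over positive reals s_a, the sum of squares s_1^2 + ... + s_k^2 is at least S^2/k, with equality iff all s_a = S/k; consequently the joint minimization of (R_2 + sum s_a^2)/((R_1 + sum s_a)^2) over positive s_1,...,s_k reduces to the equal-amplitude case, and the global minimum equals Q_0/(1 + k Q_0), attained exactly when all s_a = R_2/R_1. -/
/-!
By the variance identity `∑ (s a - S/k)² = ∑ s a² - S²/k`, the sum of squares at fixed total `S`
exceeds `S²/k` by a sum of squares, which vanishes exactly when all `s a` are equal. For the ratio,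
with `T = ∑ s a²` and `c = R₁² + k R₂`,
`(R₂ + T) c - R₂ (R₁ + S)² = (T - S²/k) c + (S R₁ - k R₂)²/k`,
so the ratio is at least `R₂ / c = Q₀ / (1 + k Q₀)`, with equality iff all amplitudes are equal
and `S R₁ = k R₂`, i.e. iff every `s a = R₂ / R₁`.
-/

open Finset

section Variance

variable {ι : Type*} (s : Finset ι) (f : ι → ℝ)

theorem Finset.sum_sq_sub_mean_eq :
    ∑ i ∈ s, (f i - (∑ j ∈ s, f j) / #s) ^ 2 = ∑ i ∈ s, f i ^ 2 - (∑ i ∈ s, f i) ^ 2 / #s := by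
  obtain rfl | hs := s.eq_empty_or_nonempty
  · simp
  have hcard : (#s : ℝ) ≠ 0 := by positivity
  simp only [sub_sq, sum_add_distrib, sum_sub_distrib, ← sum_mul, ← mul_sum, sum_const,
    nsmul_eq_mul]
  field_simp
  ring

theorem Finset.sq_sum_div_card_le_sum_sq : (∑ i ∈ s, f i) ^ 2 / #s ≤ ∑ i ∈ s, f i ^ 2 := by
  have := s.sum_sq_sub_mean_eq f
  have : 0 ≤ ∑ i ∈ s, (f i - (∑ j ∈ s, f j) / #s) ^ 2 := sum_nonneg fun _ _ ↦ sq_nonneg _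
  linarith

theorem Finset.sum_sq_eq_sq_sum_div_card_iff :
    ∑ i ∈ s, f i ^ 2 = (∑ i ∈ s, f i) ^ 2 / #s ↔ ∀ i ∈ s, f i = (∑ j ∈ s, f j) / #s := by
  rw [← sub_eq_zero, ← s.sum_sq_sub_mean_eq f, sum_eq_zero_iff_of_nonneg fun _ _ ↦ sq_nonneg _]
  simp only [sq_eq_zero_iff, sub_eq_zero]

end Variance

section Ratio

variable {n R₁ R₂ S T : ℝ}

theorem add_mul_sub_mul_add_sq_eq (hn : n ≠ 0) :
    (R₂ + T) * (R₁ ^ 2 + n * R₂) - R₂ * (R₁ + S) ^ 2 =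
      (T - S ^ 2 / n) * (R₁ ^ 2 + n * R₂) + (S * R₁ - n * R₂) ^ 2 / n := by
  field_simp
  ring

theorem div_le_add_div_add_sq (hn : 0 < n) (hR₂ : 0 < R₂) (hRS : R₁ + S ≠ 0)
    (hT : S ^ 2 / n ≤ T) : R₂ / (R₁ ^ 2 + n * R₂) ≤ (R₂ + T) / (R₁ + S) ^ 2 := by
  rw [div_le_div_iff₀ (by positivity) (by positivity), ← sub_nonneg,
    add_mul_sub_mul_add_sq_eq hn.ne']
  have : 0 ≤ T - S ^ 2 / n := sub_nonneg.2 hT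
  positivity

theorem add_div_add_sq_eq_div_iff (hn : 0 < n) (hR₂ : 0 < R₂) (hRS : R₁ + S ≠ 0)
    (hT : S ^ 2 / n ≤ T) :
    (R₂ + T) / (R₁ + S) ^ 2 = R₂ / (R₁ ^ 2 + n * R₂) ↔ T = S ^ 2 / n ∧ S * R₁ = n * R₂ := by
  have hc : 0 < R₁ ^ 2 + n * R₂ := by positivity
  rw [div_eq_div_iff (by positivity) hc.ne', ← sub_eq_zero, add_mul_sub_mul_add_sq_eq hn.ne',
    add_eq_zero_iff_of_nonneg (mul_nonneg (sub_nonneg.2 hT) hc.le) (by positivity),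
    mul_eq_zero, div_eq_zero_iff, sq_eq_zero_iff, sub_eq_zero, sub_eq_zero]
  simp [hc.ne', hn.ne']

end Ratio

theorem stmt8 (k : ℕ) (hk : 1 ≤ k) (s : Fin k → ℝ) (hs : ∀ a, 0 < s a)
    (S : ℝ) (hS : S = ∑ a, s a)
    (R1 R2 : ℝ) (hR1 : 0 < R1) (hR2 : 0 < R2)
    (Q0 : ℝ) (hQ0 : Q0 = R2 / R1 ^ 2) :
    (S ^ 2 / k ≤ ∑ a, (s a) ^ 2 ∧
      (∑ a, (s a) ^ 2 = S ^ 2 / k ↔ ∀ a, s a = S / k)) ∧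
    (Q0 / (1 + k * Q0) ≤ (R2 + ∑ a, (s a) ^ 2) / (R1 + ∑ a, s a) ^ 2 ∧
      ((R2 + ∑ a, (s a) ^ 2) / (R1 + ∑ a, s a) ^ 2 = Q0 / (1 + k * Q0) ↔
        ∀ a, s a = R2 / R1)) := by
  have hk₀ : (0 : ℝ) < k := by exact_mod_cast hk
  have hqm := univ.sq_sum_div_card_le_sum_sq s
  have hqm_eq := univ.sum_sq_eq_sq_sum_div_card_iff s
  simp only [card_univ, Fintype.card_fin, mem_univ, true_implies] at hqm hqm_eq
  subst hS
  have hRS : R1 + ∑ a, s a ≠ 0 :=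
    (add_pos hR1 (sum_pos (fun a _ ↦ hs a) (univ_nonempty_iff.2 ⟨⟨0, hk⟩⟩))).ne'
  have hmin : Q0 / (1 + k * Q0) = R2 / (R1 ^ 2 + k * R2) := by
    subst hQ0
    field_simp
  refine ⟨⟨hqm, hqm_eq⟩, hmin ▸ div_le_add_div_add_sq hk₀ hR2 hRS hqm, ?_⟩
  rw [hmin, add_div_add_sq_eq_div_iff hk₀ hR2 hRS hqm, hqm_eq]
  constructor
  · rintro ⟨hequal, hSR⟩ a
    rw [hequal a, div_eq_div_iff hk₀.ne' hR1.ne', hSR, mul_comm]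
  · intro h
    have hsum : ∑ a, s a = k * (R2 / R1) := by simp [h]
    refine ⟨fun a ↦ ?_, ?_⟩
    · rw [h a, hsum]
      field_simp
    · rw [hsum]
      field_simp
end

section
/- For the one-particle extension with new amplitude share p_X = r/(R_1 + r), the extended Koide ratio satisfies the exact identity Q = p_X^2 + Q_0 (1 - p_X)^2 = Q_min + (p_X - Q_min)^2/(1 - Q_min), where Q_min = Q_0/(1 + Q_0); in particular Q is exactly quadratic in p_X with unique minimum at p_X = Q_min. -/
/-!
Since `1 - r / (R₁ + r) = R₁ / (R₁ + r)`, splitting the numerator `R₂ + r²` writes the extended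
ratio as `p² + Q₀ (1 - p)²` in the new share `p`. Completing the square, this quadratic is
`Q₀ / (1 + Q₀) + (1 + Q₀) (p - Q₀ / (1 + Q₀))²`, and `1 + Q₀ = 1 / (1 - Q_min)`.
-/

lemma div_add_sq_eq_sq_add_mul_one_sub_sq {R₁ r : ℝ} (hR₁ : R₁ ≠ 0) (hR₁r : R₁ + r ≠ 0)
    (R₂ : ℝ) :
    (R₂ + r ^ 2) / (R₁ + r) ^ 2 =
      (r / (R₁ + r)) ^ 2 + R₂ / R₁ ^ 2 * (1 - r / (R₁ + r)) ^ 2 := by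
  field_simp
  ring

lemma sq_add_mul_one_sub_sq_eq {q : ℝ} (hq : 1 + q ≠ 0) (p : ℝ) :
    p ^ 2 + q * (1 - p) ^ 2 = q / (1 + q) + (1 + q) * (p - q / (1 + q)) ^ 2 := by
  field_simp
  ring

lemma one_sub_div_one_add_inv {q : ℝ} (hq : 1 + q ≠ 0) : (1 - q / (1 + q))⁻¹ = 1 + q := by
  rw [one_sub_div hq, add_sub_cancel_right, one_div, inv_inv]

theorem stmt13_general (R1 R2 : ℝ) (hR1 : 0 < R1)
    (Q0 : ℝ) (hQ0 : Q0 = R2 / R1 ^ 2) (hQ0pos : 0 < Q0)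
    (Qmin : ℝ) (hQmin : Qmin = Q0 / (1 + Q0))
    (r : ℝ) (hr : 0 < r)
    (pX Q : ℝ) (hpX : pX = r / (R1 + r)) (hQ : Q = (R2 + r ^ 2) / (R1 + r) ^ 2) :
    Q = pX ^ 2 + Q0 * (1 - pX) ^ 2 ∧
      Q = Qmin + (pX - Qmin) ^ 2 / (1 - Qmin) ∧
      Qmin ^ 2 + Q0 * (1 - Qmin) ^ 2 = Qmin ∧
      ∀ p : ℝ, p ≠ Qmin → Qmin < p ^ 2 + Q0 * (1 - p) ^ 2 := by
  have h1Q0 : 0 < 1 + Q0 := by linarith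
  have hcompleted := sq_add_mul_one_sub_sq_eq h1Q0.ne'
  rw [← hQmin] at hcompleted
  have hsplit : Q = pX ^ 2 + Q0 * (1 - pX) ^ 2 := by
    rw [hQ, hpX, hQ0]
    exact div_add_sq_eq_sq_add_mul_one_sub_sq hR1.ne' (by positivity) R2
  refine ⟨hsplit, ?_, by simp [hcompleted], fun p hp => ?_⟩
  · rw [hsplit, hcompleted, div_eq_mul_inv, hQmin, one_sub_div_one_add_inv h1Q0.ne', ← hQmin,
      mul_comm]
  · rw [hcompleted, lt_add_iff_pos_right]
    exact mul_pos h1Q0 (sq_pos_of_ne_zero (sub_ne_zero.mpr hp))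

theorem stmt13 (R1 R2 : ℝ) (hR1 : 0 < R1) (hR2 : 0 < R2)
    (Q0 : ℝ) (hQ0 : Q0 = R2 / R1 ^ 2) (hQ0pos : 0 < Q0) (hQ0le : Q0 ≤ 1)
    (Qmin : ℝ) (hQmin : Qmin = Q0 / (1 + Q0))
    (r : ℝ) (hr : 0 < r)
    (pX Q : ℝ) (hpX : pX = r / (R1 + r)) (hQ : Q = (R2 + r ^ 2) / (R1 + r) ^ 2) :
    Q = pX ^ 2 + Q0 * (1 - pX) ^ 2 ∧
      Q = Qmin + (pX - Qmin) ^ 2 / (1 - Qmin) ∧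
      Qmin ^ 2 + Q0 * (1 - Qmin) ^ 2 = Qmin ∧
      ∀ p : ℝ, p ≠ Qmin → Qmin < p ^ 2 + Q0 * (1 - p) ^ 2 :=
  stmt13_general R1 R2 hR1 Q0 hQ0 hQ0pos Qmin hQmin r hr pX Q hpX hQ
end
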